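/- Let a be a discrete phase-type (PH) distribution on ℕ and let c be a probability distribution on ℕ belonging to F_alg (the distributions of independent ℕ-valued random variables X and Z), and suppose s = ∑ₙ a n · c n > 0. Then the conditional distribution of X given the event X = Z, namely n ↦ a n · c n / s, belongs to F_alg. -/

import Mathlib

open Matrix Filter

/-- `p` is a probability distribution on ℕ. -/
def IsProbDist (p : ℕ → ℝ) : Prop :=
  (∀ n, 0 ≤ p n) ∧ HasSum p 1

/-- `p` is a discrete phase-type (PH) distribution on ℕ. -/
def IsPH (p : ℕ → ℝ) : Prop :=
  IsProbDist p ∧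
  ∃ m : ℕ, 1 ≤ m ∧
    ∃ (α : Fin m → ℝ) (T : Matrix (Fin m) (Fin m) ℝ),
      (∀ i, 0 ≤ α i) ∧ (∑ i, α i) ≤ 1 ∧
      (∀ i j, 0 ≤ T i j) ∧ (∀ i, (∑ j, T i j) ≤ 1) ∧
      p 0 = 1 - ∑ i, α i ∧
      ∀ n, 1 ≤ n → p n = α ⬝ᵥ (T ^ (n - 1)).mulVec (fun i => 1 - ∑ j, T i j)

/-- One step of the SCFG fixed-point iteration: substitute the power series
`f W` for the variable `y_W` and `PowerSeries.X` for the variable `z`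
(`none` encodes `z`, `some W` encodes `y_W`). -/
noncomputable def grammarStep {V : Type} (P : V → MvPolynomial (Option V) ℝ)
    (f : V → PowerSeries ℝ) (W : V) : PowerSeries ℝ :=
  MvPolynomial.aeval (fun o : Option V => o.elim PowerSeries.X f) (P W)

/-- The SCFG fixed-point iteration starting from the zero tuple. -/
noncomputable def grammarIter {V : Type} (P : V → MvPolynomial (Option V) ℝ) :
    ℕ → V → PowerSeries ℝ
  | 0 => fun _ => 0
  | k + 1 => grammarStep P (grammarIter P k)

/-- `q` belongs to `F_alg`: `q` is a normalized ℝ₊-algebraic sequence, i.e. it is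
produced by a stochastic context-free grammar over a one-letter alphabet.  There
are a finite set `V` of nonterminals with start symbol `S` and polynomials `P W`
with nonnegative coefficients in the variables `(y_W)` and `z` such that the
fixed-point iteration from the zero tuple converges coefficientwise to a tuple
`f` of power series with nonnegative coefficients satisfying `f_V = P_V(f, z)`,
the coefficients of `f S` have finite positive sum `s`, and `q n = [zⁿ](f S)/s`. -/
def MemFalg (q : ℕ → ℝ) : Prop :=
  ∃ (V : Type) (_ : Fintype V) (S : V) (P : V → MvPolynomial (Option V) ℝ)
    (f : V → PowerSeries ℝ),
    (∀ W d, 0 ≤ MvPolynomial.coeff d (P W)) ∧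
    (∀ W (n : ℕ), Tendsto (fun k => PowerSeries.coeff (R := ℝ) n (grammarIter P k W))
      atTop (nhds (PowerSeries.coeff (R := ℝ) n (f W)))) ∧
    (∀ W, f W = grammarStep P f W) ∧
    (∀ W (n : ℕ), 0 ≤ PowerSeries.coeff (R := ℝ) n (f W)) ∧
    ∃ s : ℝ, HasSum (fun n => PowerSeries.coeff (R := ℝ) n (f S)) s ∧ 0 < s ∧
      ∀ n, q n = PowerSeries.coeff (R := ℝ) n (f S) / s

/-!
A PH distribution is the output of a nonnegative weighted automaton, `a n = ∑ⱼ τⱼ (Mⁿ)ₑⱼ`.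
The map `g ↦ ∑ₙ gₙ Mⁿ zⁿ` from power series to matrices of power series is a ring homomorphism
(because `Mᵃ⁺ᵇ = Mᵃ Mᵇ`), so it carries a nonnegative polynomial system `f = P(f, z)` to a
nonnegative system for the entries of the images of the `f_W`: `z` becomes the matrix `z M` and
`y_W` a matrix of fresh variables. The fixed-point iteration is carried along entrywise. A new
start symbol with production `∑ⱼ τⱼ y_(S, e, j)` then generates `∑ₙ aₙ [zⁿ] f_S zⁿ`, and the
Hadamard product `a ⊙ c` is this series up to normalisation.
-/

namespace MvPolynomial

section NonnegCoeffs

variable {R σ : Type*} [CommSemiring R] [PartialOrder R] [IsOrderedRing R]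

variable (R σ) in
def nonnegCoeffs : Subsemiring (MvPolynomial σ R) where
  carrier := {p | ∀ d, 0 ≤ p.coeff d}
  mul_mem' {p q} hp hq d := by
    classical
    rw [coeff_mul]
    exact Finset.sum_nonneg fun x _ => mul_nonneg (hp x.1) (hq x.2)
  one_mem' d := by
    classical
    rw [coeff_one]
    split_ifs <;> simp
  add_mem' hp hq d := by
    rw [coeff_add]
    exact add_nonneg (hp d) (hq d)
  zero_mem' d := by simp

theorem monomial_mem_nonnegCoeffs (μ : σ →₀ ℕ) {r : R} (hr : 0 ≤ r) :
    monomial μ r ∈ nonnegCoeffs R σ := fun d => by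
  classical
  rw [coeff_monomial]
  split_ifs <;> simp [hr]

theorem C_mem_nonnegCoeffs {r : R} (hr : 0 ≤ r) : C r ∈ nonnegCoeffs R σ :=
  monomial_mem_nonnegCoeffs 0 hr

theorem X_mem_nonnegCoeffs (v : σ) : X v ∈ nonnegCoeffs R σ :=
  monomial_mem_nonnegCoeffs _ zero_le_one

theorem rename_mem_nonnegCoeffs {τ : Type*} (k : σ → τ) {p : MvPolynomial σ R}
    (hp : p ∈ nonnegCoeffs R σ) : rename k p ∈ nonnegCoeffs R τ := by
  rw [p.as_sum, map_sum]
  exact Subsemiring.sum_mem _ fun μ _ => by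
    rw [rename_monomial]
    exact monomial_mem_nonnegCoeffs _ (hp μ)

end NonnegCoeffs

section NcEval

variable {R A σ : Type*} [CommSemiring R] [Semiring A] [Algebra R A] [Fintype σ]

/-- Evaluation at a family of possibly non-commuting elements: in each monomial the variables
are multiplied in the fixed order `Finset.univ.toList`. -/
noncomputable def ncEval (x : σ → A) (p : MvPolynomial σ R) : A :=
  ∑ μ ∈ p.support, p.coeff μ • (Finset.univ.toList.map fun v => x v ^ μ v).prod

theorem map_ncEval {B C : Type*} [Semiring B] [Algebra R B] [CommSemiring C] [Algebra R C]
    (φ : A →ₐ[R] B) (χ : C →ₐ[R] B) (x : σ → A) (y : σ → C) (hxy : ∀ v, φ (x v) = χ (y v))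
    (p : MvPolynomial σ R) : φ (ncEval x p) = χ (aeval y p) := by
  rw [ncEval, aeval_def, eval₂_eq', map_sum, map_sum]
  refine Finset.sum_congr rfl fun μ _ => ?_
  rw [map_smul, map_list_prod, ← Algebra.smul_def, map_smul, ← Finset.prod_map_toList,
    map_list_prod, List.map_map, List.map_map]
  congr 2
  exact List.map_congr_left fun v _ => by simp [hxy]

theorem ncEval_mem {S : Subsemiring A} {x : σ → A} (hx : ∀ v, x v ∈ S) {p : MvPolynomial σ R}
    (hp : ∀ μ, algebraMap R A (p.coeff μ) ∈ S) : ncEval x p ∈ S := by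
  refine S.sum_mem fun μ _ => ?_
  rw [Algebra.smul_def]
  refine S.mul_mem (hp μ) (S.list_prod_mem fun y hy => ?_)
  obtain ⟨v, -, rfl⟩ := List.mem_map.1 hy
  exact S.pow_mem (hx v) _

end NcEval

end MvPolynomial

namespace PowerSeries

variable {R ι : Type*} [CommSemiring R] [Fintype ι] [DecidableEq ι]

/-- `g ↦ ∑ₙ gₙ Mⁿ Xⁿ`: entrywise, the Hadamard product of `g` with the rational series
`∑ₙ (Mⁿ)ᵢⱼ Xⁿ`. -/
noncomputable def hadamardMatrix (M : Matrix ι ι R) :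
    PowerSeries R →ₐ[R] Matrix ι ι (PowerSeries R) where
  toFun g := Matrix.of fun i j => mk fun n => coeff n g * (M ^ n) i j
  map_one' := by
    ext i j n
    rcases eq_or_ne n 0 with rfl | hn
    · simp [Matrix.one_apply]
    · simp only [Matrix.one_apply]
      split_ifs <;> simp [coeff_one, hn]
  map_mul' g h := by
    ext i j n
    simp only [Matrix.of_apply, coeff_mk, Matrix.mul_apply, map_sum, coeff_mul, Finset.sum_mul]
    rw [Finset.sum_comm]
    refine Finset.sum_congr rfl fun p hp => ?_
    rw [← Finset.HasAntidiagonal.mem_antidiagonal.1 hp, pow_add, Matrix.mul_apply, Finset.mul_sum]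
    exact Finset.sum_congr rfl fun x _ => by ring
  map_zero' := by ext; simp
  map_add' g h := by ext; simp [add_mul]
  commutes' r := by
    ext i j n
    by_cases hij : i = j <;> rcases eq_or_ne n 0 with rfl | hn <;>
      simp [Matrix.algebraMap_eq_diagonal, coeff_C, *]

@[simp]
theorem coeff_hadamardMatrix (M : Matrix ι ι R) (g : PowerSeries R) (i j : ι) (n : ℕ) :
    coeff n (hadamardMatrix M g i j) = coeff n g * (M ^ n) i j := by
  simp [hadamardMatrix]

theorem hadamardMatrix_X (M : Matrix ι ι R) :
    hadamardMatrix M X = Matrix.of fun i j => C (M i j) * X := by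
  ext i j n
  rcases eq_or_ne n 1 with rfl | hn
  · simp
  · simp [coeff_X, hn]

end PowerSeries

open PowerSeries MvPolynomial

section Grammar

variable {V : Type}

structure IsNonnegSystem (P : V → MvPolynomial (Option V) ℝ) (f : V → PowerSeries ℝ) : Prop where
  mem_nonnegCoeffs : ∀ W, P W ∈ nonnegCoeffs ℝ (Option V)
  tendsto_coeff_iter : ∀ W (n : ℕ),
    Tendsto (fun k => coeff n (grammarIter P k W)) atTop (nhds (coeff n (f W)))
  eq_step : ∀ W, f W = grammarStep P f W
  coeff_nonneg : ∀ W (n : ℕ), 0 ≤ coeff n (f W)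

/-- The ℝ₊-algebraic power series: components of solutions of nonnegative polynomial systems. -/
def IsNonnegAlgebraic (g : PowerSeries ℝ) : Prop :=
  ∃ (V : Type) (_ : Fintype V) (P : V → MvPolynomial (Option V) ℝ) (f : V → PowerSeries ℝ)
    (S : V), IsNonnegSystem P f ∧ f S = g

theorem memFalg_iff {q : ℕ → ℝ} :
    MemFalg q ↔ ∃ g, IsNonnegAlgebraic g ∧
      ∃ s, HasSum (fun n => coeff n g) s ∧ 0 < s ∧ ∀ n, q n = coeff n g / s := by
  constructor
  · rintro ⟨V, hV, S, P, f, hP, htendsto, hstep, hf, s, hs, hspos, hq⟩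
    exact ⟨f S, ⟨V, hV, P, f, S, ⟨hP, htendsto, hstep, hf⟩, rfl⟩, s, hs, hspos, hq⟩
  · rintro ⟨_, ⟨V, hV, P, f, S, ⟨hP, htendsto, hstep, hf⟩, rfl⟩, s, hs, hspos, hq⟩
    exact ⟨V, hV, S, P, f, hP, htendsto, hstep, hf, s, hs, hspos, hq⟩

section LinearStart

variable {κ : Type*} [Fintype κ]

/-- Adjoins to `V` a start symbol `none` with the linear production `∑ⱼ τⱼ y_{w j}`. -/
noncomputable def withLinearStart (P : V → MvPolynomial (Option V) ℝ) (τ : κ → ℝ) (w : κ → V) :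
    Option V → MvPolynomial (Option (Option V)) ℝ
  | none => ∑ j, MvPolynomial.C (τ j) * X (some (some (w j)))
  | some W => rename (Option.map some) (P W)

variable {P : V → MvPolynomial (Option V) ℝ} {τ : κ → ℝ} {w : κ → V}

theorem grammarStep_withLinearStart_none (F : Option V → PowerSeries ℝ) :
    grammarStep (withLinearStart P τ w) F none = ∑ j, τ j • F (some (w j)) := by
  simp [grammarStep, withLinearStart, Algebra.smul_def]

theorem grammarStep_withLinearStart_some (F : Option V → PowerSeries ℝ) (W : V) :
    grammarStep (withLinearStart P τ w) F (some W) = grammarStep P (F ∘ some) W := by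
  rw [grammarStep, withLinearStart, aeval_rename, grammarStep]
  congr 2
  ext (_ | _) <;> rfl

theorem grammarIter_withLinearStart_some (k : ℕ) (W : V) :
    grammarIter (withLinearStart P τ w) k (some W) = grammarIter P k W := by
  induction k generalizing W with
  | zero => rfl
  | succ k ih =>
    rw [grammarIter, grammarStep_withLinearStart_some, grammarIter]
    exact congrArg (grammarStep P · W) (funext ih)

theorem grammarIter_withLinearStart_none (k : ℕ) :
    grammarIter (withLinearStart P τ w) (k + 1) none = ∑ j, τ j • grammarIter P k (w j) := by
  rw [grammarIter, grammarStep_withLinearStart_none]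
  simp only [grammarIter_withLinearStart_some]

theorem IsNonnegSystem.withLinearStart {f : V → PowerSeries ℝ} (h : IsNonnegSystem P f)
    (hτ : ∀ j, 0 ≤ τ j) (w : κ → V) :
    IsNonnegSystem (withLinearStart P τ w) (fun o => o.elim (∑ j, τ j • f (w j)) f) where
  mem_nonnegCoeffs
    | none => Subsemiring.sum_mem _ fun j _ =>
        Subsemiring.mul_mem _ (C_mem_nonnegCoeffs (hτ j)) (X_mem_nonnegCoeffs _)
    | some W => rename_mem_nonnegCoeffs _ (h.mem_nonnegCoeffs W)
  tendsto_coeff_iter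
    | none, n => by
      rw [← tendsto_add_atTop_iff_nat 1]
      simp only [grammarIter_withLinearStart_none, map_sum, map_smul, Option.elim]
      exact tendsto_finsetSum _ fun j _ => (h.tendsto_coeff_iter (w j) n).const_smul (τ j)
    | some W, n => by
      simp only [grammarIter_withLinearStart_some]
      exact h.tendsto_coeff_iter W n
  eq_step
    | none => by rw [grammarStep_withLinearStart_none]; rfl
    | some W => by rw [grammarStep_withLinearStart_some]; exact h.eq_step W
  coeff_nonneg
    | none, n => by
      simp only [Option.elim, map_sum, map_smul, smul_eq_mul]
      exact Finset.sum_nonneg fun j _ => mul_nonneg (hτ j) (h.coeff_nonneg (w j) n)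
    | some W, n => h.coeff_nonneg W n

theorem IsNonnegSystem.isNonnegAlgebraic_sum_smul [Fintype V] {f : V → PowerSeries ℝ}
    (h : IsNonnegSystem P f) (hτ : ∀ j, 0 ≤ τ j) (w : κ → V) :
    IsNonnegAlgebraic (∑ j, τ j • f (w j)) :=
  ⟨Option V, inferInstance, _, _, none, h.withLinearStart hτ w, rfl⟩

end LinearStart

section Hadamard

variable {ι : Type} [Fintype ι] [DecidableEq ι]

/-- The matrices substituted for `z` (`none`) and `y_W` (`some W`): the images under
`hadamardMatrix M` of `X` and of `f W`, the entries of the latter becoming fresh variables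
`y_(W, i, j)`. -/
noncomputable def hadamardVarMatrix (M : Matrix ι ι ℝ) :
    Option V → Matrix ι ι (MvPolynomial (Option (V × ι × ι)) ℝ)
  | none => Matrix.of fun i j => MvPolynomial.C (M i j) * X none
  | some W => Matrix.of fun i j => X (some (W, i, j))

noncomputable def hadamardSystem [Fintype V] (M : Matrix ι ι ℝ)
    (P : V → MvPolynomial (Option V) ℝ) (w : V × ι × ι) : MvPolynomial (Option (V × ι × ι)) ℝ :=
  ncEval (hadamardVarMatrix M) (P w.1) w.2.1 w.2.2

noncomputable def hadamardLift (M : Matrix ι ι ℝ) (F : V → PowerSeries ℝ) (w : V × ι × ι) :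
    PowerSeries ℝ :=
  hadamardMatrix M (F w.1) w.2.1 w.2.2

variable [Fintype V] (M : Matrix ι ι ℝ) (P : V → MvPolynomial (Option V) ℝ)

theorem grammarStep_hadamardSystem (F : V → PowerSeries ℝ) :
    grammarStep (hadamardSystem M P) (hadamardLift M F) = hadamardLift M (grammarStep P F) := by
  ext ⟨W, i, j⟩ : 1
  have hvar : ∀ v, (aeval fun o => o.elim PowerSeries.X (hadamardLift M F)).mapMatrix
      (hadamardVarMatrix M v) = hadamardMatrix M (v.elim PowerSeries.X F) := by
    rintro (_ | W) <;> ext i j <;> simp [hadamardVarMatrix, hadamardMatrix_X, hadamardLift]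
  exact congrFun (congrFun (map_ncEval _ _ _ _ hvar (P W)) i) j

theorem grammarIter_hadamardSystem (k : ℕ) :
    grammarIter (hadamardSystem M P) k = hadamardLift M (grammarIter P k) := by
  induction k with
  | zero => ext; simp [grammarIter, hadamardLift]
  | succ k ih => rw [grammarIter, ih, grammarStep_hadamardSystem, grammarIter]

variable {M P}

theorem IsNonnegSystem.hadamard {f : V → PowerSeries ℝ} (h : IsNonnegSystem P f)
    (hM : ∀ i j, 0 ≤ M i j) : IsNonnegSystem (hadamardSystem M P) (hadamardLift M f) where
  mem_nonnegCoeffs := fun ⟨W, i, j⟩ => by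
    have hvar : ∀ v, hadamardVarMatrix M v ∈ (nonnegCoeffs ℝ (Option (V × ι × ι))).matrix := by
      rintro (_ | W) i j
      · exact Subsemiring.mul_mem _ (C_mem_nonnegCoeffs (hM i j)) (X_mem_nonnegCoeffs _)
      · exact X_mem_nonnegCoeffs _
    refine ncEval_mem hvar (fun μ a b => ?_) i j
    simp only [Matrix.algebraMap_eq_diagonal, Matrix.diagonal_apply, Pi.algebraMap_apply,
      MvPolynomial.algebraMap_eq]
    split_ifs
    · exact C_mem_nonnegCoeffs (h.mem_nonnegCoeffs W μ)
    · exact Subsemiring.zero_mem _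
  tendsto_coeff_iter := fun ⟨W, i, j⟩ n => by
    simp only [grammarIter_hadamardSystem, hadamardLift, coeff_hadamardMatrix]
    exact (h.tendsto_coeff_iter W n).mul_const _
  eq_step := by
    rw [← _root_.funext_iff, grammarStep_hadamardSystem, ← funext h.eq_step]
  coeff_nonneg := fun ⟨W, i, j⟩ n => by
    simp only [hadamardLift, coeff_hadamardMatrix]
    have hM' : M ∈ (Subsemiring.nonneg ℝ).matrix := hM
    exact mul_nonneg (h.coeff_nonneg W n) (Subsemiring.pow_mem _ hM' n i j)

theorem IsNonnegAlgebraic.hadamard {g : PowerSeries ℝ} (hg : IsNonnegAlgebraic g)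
    (hM : ∀ i j, 0 ≤ M i j) {τ : ι → ℝ} (hτ : ∀ j, 0 ≤ τ j) (e : ι) :
    IsNonnegAlgebraic (PowerSeries.mk fun n => (∑ j, τ j * (M ^ n) e j) * coeff n g) := by
  obtain ⟨V, _, P, f, S, hf, rfl⟩ := hg
  convert (hf.hadamard hM).isNonnegAlgebraic_sum_smul hτ (fun j => (S, e, j)) using 1
  ext n
  simp only [coeff_mk, map_sum, map_smul, hadamardLift, coeff_hadamardMatrix, smul_eq_mul,
    Finset.sum_mul]
  exact Finset.sum_congr rfl fun j _ => by ring

end Hadamard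

end Grammar

theorem Matrix.fromBlocks_zero_zero_pow_succ {l m α : Type*} [Fintype l] [Fintype m]
    [DecidableEq l] [DecidableEq m] [Semiring α] (B : Matrix l m α) (D : Matrix m m α) (k : ℕ) :
    fromBlocks (0 : Matrix l l α) B 0 D ^ (k + 1) = fromBlocks 0 (B * D ^ k) 0 (D ^ (k + 1)) := by
  induction k with
  | zero => simp
  | succ k ih =>
    rw [pow_succ, ih, fromBlocks_multiply]
    simp [pow_succ, Matrix.mul_assoc]

theorem IsPH.exists_matrix_repr {a : ℕ → ℝ} (ha : IsPH a) :
    ∃ (ι : Type) (_ : Fintype ι) (_ : DecidableEq ι) (M : Matrix ι ι ℝ) (e : ι) (τ : ι → ℝ),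
      (∀ i j, 0 ≤ M i j) ∧ (∀ j, 0 ≤ τ j) ∧ ∀ n, a n = ∑ j, τ j * (M ^ n) e j := by
  obtain ⟨-, m, -, α, T, hα, hαsum, hT, hTsum, ha0, ha⟩ := ha
  -- an extra initial state `inl ()` enters `inr i` with weight `α i` and exits with `a 0`
  refine ⟨Unit ⊕ Fin m, inferInstance, inferInstance, fromBlocks 0 (replicateRow Unit α) 0 T,
    Sum.inl (), Sum.elim (fun _ => 1 - ∑ i, α i) (fun i => 1 - ∑ j, T i j), ?_, ?_, ?_⟩
  · rintro (_ | i) (_ | j) <;> simp [hα, hT]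
  · rintro (_ | i) <;> simp [hαsum, hTsum]
  · rintro (_ | n)
    · simp [ha0]
    · rw [ha (n + 1) n.succ_pos, Nat.add_sub_cancel, dotProduct_mulVec, dotProduct,
        Matrix.fromBlocks_zero_zero_pow_succ, Fintype.sum_sum_type]
      simp [← replicateRow_vecMul, mul_comm]

theorem ph_falg_hadamard_conditioned_mem_falg_general (a c : ℕ → ℝ) (s : ℝ)
    (ha : IsPH a) (hcalg : MemFalg c)
    (hs : HasSum (fun n => a n * c n) s) (hspos : 0 < s) :
    MemFalg (fun n => a n * c n / s) := by
  obtain ⟨ι, _, _, M, e, τ, hM, hτ, ha⟩ := ha.exists_matrix_repr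
  obtain ⟨g, hg, t, -, htpos, hcg⟩ := memFalg_iff.1 hcalg
  have hcoeff : ∀ n, coeff n (PowerSeries.mk fun n => (∑ j, τ j * (M ^ n) e j) * coeff n g) =
      a n * c n * t := fun n => by
    rw [coeff_mk, ← ha, hcg, mul_assoc, div_mul_cancel₀ _ htpos.ne']
  refine memFalg_iff.2 ⟨_, hg.hadamard hM hτ e, s * t, ?_, mul_pos hspos htpos, fun n => ?_⟩
  · simpa only [hcoeff] using hs.mul_right t
  · rw [hcoeff, mul_div_mul_right _ _ htpos.ne']

/-- If `X, Z` are independent ℕ-valued random variables, `X` with a PH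
distribution `a` and `Z` with a distribution `c ∈ F_alg`, then the conditional
distribution of `X` given `X = Z`, namely `n ↦ a n · c n / s` with
`s = ∑ₙ a n · c n > 0`, belongs to `F_alg`. -/
theorem ph_falg_hadamard_conditioned_mem_falg (a c : ℕ → ℝ) (s : ℝ)
    (ha : IsPH a) (hc : IsProbDist c) (hcalg : MemFalg c)
    (hs : HasSum (fun n => a n * c n) s) (hspos : 0 < s) :
    MemFalg (fun n => a n * c n / s) :=
  ph_falg_hadamard_conditioned_mem_falg_general a c s ha hcalg hs hspos
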